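/- arXiv:1805.07541 — 3 statements merged into one kernel-verified Lean document; each statement's English description precedes it below -/
import Mathlib

section
/- Let W be a real d×m matrix, let r be a positive real number, and set r̂ = 2r/(r+1). Then the infimum, over all m×m real symmetric positive definite matrices Ω satisfying tr(Ω^r) ≤ 1, of tr(Ω⁻¹ WᵀW) equals (Σᵢ σᵢ(W)^{r̂})^{2/r̂}, i.e. the squared Schatten r̂-norm of W, where σᵢ(W) are the singular values of W. -/
open Matrix

/-- `Wᵀ * W` is Hermitian (symmetric) for a real matrix `W`. -/
lemma isHermitian_transpose_mul {d m : ℕ} (W : Matrix (Fin d) (Fin m) ℝ) :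
    (Wᵀ * W).IsHermitian := by
  simpa using W.isHermitian_conjTranspose_mul_self

/-- The singular values of a real `d × m` matrix `W`: the square roots of the
eigenvalues of the symmetric positive semidefinite matrix `Wᵀ * W`. -/
noncomputable def singVal {d m : ℕ} (W : Matrix (Fin d) (Fin m) ℝ) (i : Fin m) : ℝ :=
  Real.sqrt ((isHermitian_transpose_mul W).eigenvalues i)

/-- The real power `A ^ p` of a (symmetric) matrix, defined through the spectral
decomposition, i.e. by applying `t ↦ t ^ p` to the eigenvalues (continuous functional
calculus). -/
noncomputable def mpow {m : ℕ} (A : Matrix (Fin m) (Fin m) ℝ) (p : ℝ) :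
    Matrix (Fin m) (Fin m) ℝ :=
  cfc (fun t : ℝ => t ^ p) A

/-! Let `λ` be the eigenvalues of `A = WᵀW` and `s = r / (r + 1)`, so that the right-hand side is
`(∑ λ ^ s) ^ (1 / s)`. Write `Ω = U diag(d) Uᵀ`; then `tr(Ω⁻¹ A) = ∑ bᵢ / dᵢ` with `b` the diagonal
of `UᵀAU`. That diagonal is the image of `λ` under the doubly stochastic matrix `(Qᵢⱼ²)`,
`Q = Uᵀ V` for `V` the eigenvectors of `A`, so concavity of `t ↦ t ^ s` gives `∑ λ ^ s ≤ ∑ b ^ s`,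
and Hölder with exponents `1 / s` and `r + 1` gives `(∑ b ^ s) ^ (1 / s) ≤ ∑ b / d` as soon as
`∑ d ^ r ≤ 1`. Conversely `Ω ∝ (A + ε) ^ (1 / (r + 1))` is admissible and achieves
`(∑ (λ + ε) ^ s) ^ (1 / s)`; the shift `ε > 0` keeps `Ω` invertible when `W` is rank-deficient,
and letting `ε → 0` shows that the bound is the infimum. -/

open Finset Filter Topology

theorem csInf_eq_of_forall_le_of_tendsto {S : Set ℝ} {T : ℝ} {f : ℝ → ℝ}
    (hle : ∀ v ∈ S, T ≤ v) (hf : Tendsto f (𝓝[>] 0) (𝓝 T)) (hS : ∀ ε > 0, ∃ v ∈ S, v ≤ f ε) :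
    sInf S = T := by
  obtain ⟨v, hv, -⟩ := hS 1 one_pos
  refine le_antisymm (ge_of_tendsto hf ?_) (le_csInf ⟨v, hv⟩ hle)
  filter_upwards [self_mem_nhdsWithin] with ε hε
  obtain ⟨w, hw, hwf⟩ := hS ε hε
  exact (csInf_le ⟨T, hle⟩ hw).trans hwf

section

variable {ι : Type*} [Fintype ι]

theorem rpow_sum_rpow_le_sum_div {r : ℝ} (hr : 0 < r) {b d : ι → ℝ} (hb : ∀ i, 0 ≤ b i)
    (hd : ∀ i, 0 < d i) (hd_sum : ∑ i, d i ^ r ≤ 1) :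
    (∑ i, b i ^ (r / (r + 1))) ^ ((r + 1) / r) ≤ ∑ i, b i / d i := by
  set s := r / (r + 1) with hs_def
  have hs_mul : s * ((r + 1) / r) = 1 := by rw [hs_def]; field_simp
  have hbd : ∀ i, 0 ≤ b i / d i := fun i => div_nonneg (hb i) (hd i).le
  have hpq : ((r + 1) / r).HolderConjugate (r + 1) := by
    rw [Real.holderConjugate_iff, one_lt_div hr]
    exact ⟨by linarith, by field_simp⟩
  -- Hölder with exponents `1/s` and `r + 1`, applied to `b^s = (b/d)^s * d^s`
  have holder := Real.inner_le_Lp_mul_Lq_of_nonneg univ hpq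
    (f := fun i => (b i / d i) ^ s) (g := fun i => d i ^ s)
    (fun i _ => Real.rpow_nonneg (hbd i) s) (fun i _ => Real.rpow_nonneg (hd i).le s)
  have hf : ∀ i, ((b i / d i) ^ s) ^ ((r + 1) / r) = b i / d i := fun i => by
    rw [← Real.rpow_mul (hbd i), hs_mul, Real.rpow_one]
  have hg : ∀ i, (d i ^ s) ^ (r + 1) = d i ^ r := fun i => by
    rw [← Real.rpow_mul (hd i).le, hs_def, div_mul_cancel₀ _ (by positivity)]
  have hfg : ∀ i, (b i / d i) ^ s * d i ^ s = b i ^ s := fun i => by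
    rw [← Real.mul_rpow (hbd i) (hd i).le, div_mul_cancel₀ _ (hd i).ne']
  simp only [hf, hg, hfg, one_div_div] at holder
  have hsum_bd : 0 ≤ ∑ i, b i / d i := sum_nonneg fun i _ => hbd i
  have key : ∑ i, b i ^ s ≤ (∑ i, b i / d i) ^ s :=
    holder.trans <| mul_le_of_le_one_right (Real.rpow_nonneg hsum_bd s) <|
      Real.rpow_le_one (sum_nonneg fun i _ => Real.rpow_nonneg (hd i).le r) hd_sum (by positivity)
  calc (∑ i, b i ^ s) ^ ((r + 1) / r)
      ≤ ((∑ i, b i / d i) ^ s) ^ ((r + 1) / r) :=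
        Real.rpow_le_rpow (sum_nonneg fun i _ => Real.rpow_nonneg (hb i) s) key (by positivity)
    _ = ∑ i, b i / d i := by rw [← Real.rpow_mul hsum_bd, hs_mul, Real.rpow_one]

theorem exists_sum_rpow_le_one_sum_div_le {r ε : ℝ} (hr : 0 < r) (hε : 0 < ε) {a : ι → ℝ}
    (ha : ∀ i, 0 ≤ a i) :
    ∃ g : ℝ → ℝ, (∀ i, 0 < g (a i)) ∧ ∑ i, g (a i) ^ r ≤ 1 ∧
      ∑ i, a i / g (a i) ≤ (∑ i, (a i + ε) ^ (r / (r + 1))) ^ ((r + 1) / r) := by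
  set X := ∑ i, (a i + ε) ^ (r / (r + 1))
  have haε : ∀ i, 0 < a i + ε := fun i => by linarith [ha i]
  have hX : 0 ≤ X := sum_nonneg fun i _ => (Real.rpow_pos_of_pos (haε i) _).le
  set c := X ^ (1 / r)
  -- the optimal weights for `a + ε`, normalised so that `∑ g ^ r = 1`
  refine ⟨fun t => (t + ε) ^ (1 / (r + 1)) / c, fun i => ?_, ?_, ?_⟩
  · have : 0 < X := sum_pos (fun j _ => Real.rpow_pos_of_pos (haε j) _) ⟨i, mem_univ i⟩
    exact div_pos (Real.rpow_pos_of_pos (haε i) _) (Real.rpow_pos_of_pos this _)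
  · have hterm : ∀ i, ((a i + ε) ^ (1 / (r + 1)) / c) ^ r = (a i + ε) ^ (r / (r + 1)) / X :=
      fun i => by
        rw [Real.div_rpow (Real.rpow_nonneg (haε i).le _) (Real.rpow_nonneg hX _),
          ← Real.rpow_mul (haε i).le, ← Real.rpow_mul hX, one_div_mul_cancel hr.ne',
          Real.rpow_one, one_div_mul_eq_div]
    simp only [hterm, ← sum_div]
    exact div_self_le_one X
  · have hterm : ∀ i, a i / ((a i + ε) ^ (1 / (r + 1)) / c) ≤ c * (a i + ε) ^ (r / (r + 1)) :=
      fun i => by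
        have hp := Real.rpow_pos_of_pos (haε i) (1 / (r + 1))
        calc a i / ((a i + ε) ^ (1 / (r + 1)) / c)
            ≤ (a i + ε) / ((a i + ε) ^ (1 / (r + 1)) / c) := by
              gcongr
              linarith
          _ = c * (a i + ε) ^ (r / (r + 1)) := by
              have hsplit : (a i + ε) ^ (r / (r + 1)) * (a i + ε) ^ (1 / (r + 1)) = a i + ε := by
                rw [← Real.rpow_add (haε i), ← add_div, div_self (by positivity), Real.rpow_one]
              nth_rewrite 1 [← hsplit]
              field_simp
    calc ∑ i, a i / ((a i + ε) ^ (1 / (r + 1)) / c)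
        ≤ ∑ i, c * (a i + ε) ^ (r / (r + 1)) := sum_le_sum fun i _ => hterm i
      _ = X ^ ((r + 1) / r) := by
        rw [← mul_sum, ← Real.rpow_add_one' hX (by positivity)]
        congr 1
        field_simp
        ring

end

section

variable {n : Type*} [Fintype n] [DecidableEq n]

theorem ConcaveOn.sum_le_sum_map_mulVec_of_mem_doublyStochastic {s : Set ℝ} {f : ℝ → ℝ}
    (hf : ConcaveOn ℝ s f) {P : Matrix n n ℝ} (hP : P ∈ doublyStochastic ℝ n) {x : n → ℝ}
    (hx : ∀ j, x j ∈ s) : ∑ j, f (x j) ≤ ∑ i, f ((P *ᵥ x) i) :=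
  calc ∑ j, f (x j) = ∑ i, ∑ j, P i j • f (x j) := by
        rw [sum_comm]
        simp_rw [← sum_smul, sum_col_of_mem_doublyStochastic hP, one_smul]
    _ ≤ ∑ i, f ((P *ᵥ x) i) := sum_le_sum fun i _ =>
        hf.le_map_sum (fun j _ => nonneg_of_mem_doublyStochastic hP)
          (sum_row_of_mem_doublyStochastic hP i) (fun j _ => hx j)

namespace Matrix

theorem of_sq_mem_doublyStochastic {Q : Matrix n n ℝ} (hQ : Q ∈ unitary (Matrix n n ℝ)) :
    of (fun i j => Q i j ^ 2) ∈ doublyStochastic ℝ n := by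
  refine mem_doublyStochastic_iff_sum.mpr ⟨fun i j => sq_nonneg _, fun i => ?_, fun j => ?_⟩
  · have h : Q * star Q = 1 := Unitary.mul_star_self_of_mem hQ
    simpa [mul_apply, sq] using congr_fun₂ h i i
  · have h : star Q * Q = 1 := Unitary.star_mul_self_of_mem hQ
    simpa [mul_apply, sq] using congr_fun₂ h j j

theorem mul_diagonal_mul_star_apply_self (Q : Matrix n n ℝ) (d : n → ℝ) (i : n) :
    (Q * diagonal d * star Q) i i = (of (fun i j => Q i j ^ 2) *ᵥ d) i := by
  simp [mul_apply, diagonal_apply, mulVec, dotProduct, sq, mul_right_comm]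

theorem IsHermitian.sum_map_eigenvalues_le_sum_map_diag {A : Matrix n n ℝ} (hA : A.IsHermitian)
    {U : Matrix n n ℝ} (hU : U ∈ unitary (Matrix n n ℝ)) {s : Set ℝ} {f : ℝ → ℝ}
    (hf : ConcaveOn ℝ s f) (hs : ∀ i, hA.eigenvalues i ∈ s) :
    ∑ i, f (hA.eigenvalues i) ≤ ∑ i, f ((star U * A * U) i i) := by
  set V : Matrix n n ℝ := (hA.eigenvectorUnitary : Matrix n n ℝ)
  have hQ : star U * V ∈ unitary (Matrix n n ℝ) :=
    Submonoid.mul_mem _ (Unitary.star_mem hU) hA.eigenvectorUnitary.2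
  have hconj : star U * A * U = (star U * V) * diagonal hA.eigenvalues * star (star U * V) := by
    have hspec : A = V * diagonal hA.eigenvalues * star V := by simpa using hA.spectral_theorem
    conv_lhs => rw [hspec]
    simp [mul_assoc]
  simp_rw [hconj, mul_diagonal_mul_star_apply_self]
  exact hf.sum_le_sum_map_mulVec_of_mem_doublyStochastic (of_sq_mem_doublyStochastic hQ) hs

end Matrix

namespace Matrix.IsHermitian

variable {𝕜 : Type*} [RCLike 𝕜] {A : Matrix n n 𝕜}

theorem trace_cfc (hA : A.IsHermitian) (f : ℝ → ℝ) :
    (cfc f A).trace = ∑ i, (f (hA.eigenvalues i) : 𝕜) := by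
  rw [hA.cfc_eq, IsHermitian.cfc, Unitary.conjStarAlgAut_apply, trace_mul_cycle,
    Unitary.coe_star_mul_self, one_mul, trace_diagonal]
  rfl

theorem forall_mem_spectrum_iff (hA : A.IsHermitian) {P : ℝ → Prop} :
    (∀ x ∈ spectrum ℝ A, P x) ↔ ∀ i, P (hA.eigenvalues i) := by
  simp [hA.spectrum_real_eq_range_eigenvalues]

theorem inv_cfc (hA : A.IsHermitian) {g : ℝ → ℝ} (hg : ∀ i, g (hA.eigenvalues i) ≠ 0) :
    (cfc g A)⁻¹ = cfc (fun t => (g t)⁻¹) A := by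
  rw [nonsing_inv_eq_ringInverse, cfc_inv g A (hA.forall_mem_spectrum_iff.mpr hg)
    (A.finite_real_spectrum.continuousOn g)]

open scoped MatrixOrder ComplexOrder in
theorem posDef_cfc (hA : A.IsHermitian) {g : ℝ → ℝ} (hg : ∀ i, 0 < g (hA.eigenvalues i)) :
    (cfc g A).PosDef := by
  rw [← isStrictlyPositive_iff_posDef, cfc_isStrictlyPositive_iff g A
    (A.finite_real_spectrum.continuousOn g)]
  exact hA.forall_mem_spectrum_iff.mpr hg

theorem trace_inv_cfc_mul (hA : A.IsHermitian) {g : ℝ → ℝ}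
    (hg : ∀ i, g (hA.eigenvalues i) ≠ 0) :
    ((cfc g A)⁻¹ * A).trace = ∑ i, (hA.eigenvalues i / g (hA.eigenvalues i) : 𝕜) := by
  have hcont := A.finite_real_spectrum.continuousOn (Y := ℝ)
  rw [hA.inv_cfc hg]
  nth_rewrite 2 [← cfc_id' ℝ A]
  rw [← cfc_mul _ _ A (hcont _) (hcont _), hA.trace_cfc]
  simp [div_eq_inv_mul]

end Matrix.IsHermitian

theorem Matrix.PosDef.trace_inv_mul {Ω : Matrix n n ℝ} (hΩ : Ω.PosDef) (A : Matrix n n ℝ) :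
    (Ω⁻¹ * A).trace = ∑ i, (star (hΩ.1.eigenvectorUnitary : Matrix n n ℝ) * A *
      (hΩ.1.eigenvectorUnitary : Matrix n n ℝ)) i i / hΩ.1.eigenvalues i := by
  rw [nonsing_inv_eq_ringInverse, ← cfc_ringInverse_id (R := ℝ) Ω hΩ.isUnit hΩ.1.isSelfAdjoint,
    hΩ.1.cfc_eq, IsHermitian.cfc, Unitary.conjStarAlgAut_apply, mul_assoc _ (star _),
    trace_mul_comm, ← mul_assoc]
  simp [trace, mul_diagonal, div_eq_mul_inv]

end

namespace Matrix.PosSemidef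

variable {m : ℕ} {A : Matrix (Fin m) (Fin m) ℝ} {r : ℝ}

theorem rpow_sum_eigenvalues_le_trace_inv_mul (hA : A.PosSemidef) (hr : 0 < r)
    {Ω : Matrix (Fin m) (Fin m) ℝ} (hΩ : Ω.PosDef) (hΩr : (mpow Ω r).trace ≤ 1) :
    (∑ i, hA.1.eigenvalues i ^ (r / (r + 1))) ^ ((r + 1) / r) ≤ (Ω⁻¹ * A).trace := by
  set U := (hΩ.1.eigenvectorUnitary : Matrix (Fin m) (Fin m) ℝ)
  have hd_sum : ∑ i, hΩ.1.eigenvalues i ^ r ≤ 1 := by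
    simpa [mpow, hΩ.1.trace_cfc] using hΩr
  have hb : ∀ i, 0 ≤ (star U * A * U) i i := fun i =>
    (hA.conjTranspose_mul_mul_same U).diag_nonneg
  rw [hΩ.trace_inv_mul]
  calc (∑ i, hA.1.eigenvalues i ^ (r / (r + 1))) ^ ((r + 1) / r)
      ≤ (∑ i, (star U * A * U) i i ^ (r / (r + 1))) ^ ((r + 1) / r) := by
        gcongr ?_ ^ _
        · exact sum_nonneg fun i _ => Real.rpow_nonneg (hA.eigenvalues_nonneg i) _
        · exact hA.1.sum_map_eigenvalues_le_sum_map_diag hΩ.1.eigenvectorUnitary.2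
            (Real.concaveOn_rpow (by positivity) (div_le_one_of_le₀ (by linarith) (by positivity)))
            hA.eigenvalues_nonneg
    _ ≤ _ := rpow_sum_rpow_le_sum_div hr hb hΩ.eigenvalues_pos hd_sum

theorem exists_posDef_trace_mpow_le_one_trace_inv_mul_le (hA : A.PosSemidef) (hr : 0 < r)
    {ε : ℝ} (hε : 0 < ε) :
    ∃ Ω : Matrix (Fin m) (Fin m) ℝ, Ω.PosDef ∧ (mpow Ω r).trace ≤ 1 ∧
      (Ω⁻¹ * A).trace ≤ (∑ i, (hA.1.eigenvalues i + ε) ^ (r / (r + 1))) ^ ((r + 1) / r) := by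
  obtain ⟨g, hg_pos, hg_sum, hg_val⟩ :=
    exists_sum_rpow_le_one_sum_div_le hr hε hA.eigenvalues_nonneg
  refine ⟨cfc g A, hA.1.posDef_cfc hg_pos, ?_, ?_⟩
  · rw [mpow, ← cfc_comp' (fun t : ℝ => t ^ r) g A
      ((A.finite_real_spectrum.image g).continuousOn _) (A.finite_real_spectrum.continuousOn g)
      hA.1.isSelfAdjoint, hA.1.trace_cfc]
    simpa using hg_sum
  · simpa [hA.1.trace_inv_cfc_mul fun i => (hg_pos i).ne'] using hg_val

end Matrix.PosSemidef

/-- the infimum over symmetric positive definite Ω with tr(Ω^r) ≤ 1 of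
tr(Ω⁻¹ WᵀW) equals the squared Schatten r̂-norm of W, where r̂ = 2r/(r+1). -/
theorem stmt1 {d m : ℕ} (W : Matrix (Fin d) (Fin m) ℝ) (r : ℝ) (hr : 0 < r)
    (rhat : ℝ) (hrhat : rhat = 2 * r / (r + 1)) :
    sInf {v : ℝ | ∃ Ω : Matrix (Fin m) (Fin m) ℝ, Ω.PosDef ∧ (mpow Ω r).trace ≤ 1 ∧
        v = (Ω⁻¹ * (Wᵀ * W)).trace}
      = (∑ i, singVal W i ^ rhat) ^ (2 / rhat) := by
  have hA : (Wᵀ * W).PosSemidef := by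
    simpa using posSemidef_conjTranspose_mul_self W
  have hsing : ∀ i, singVal W i ^ rhat = hA.1.eigenvalues i ^ (r / (r + 1)) := fun i => by
    rw [singVal, Real.sqrt_eq_rpow, ← Real.rpow_mul (hA.eigenvalues_nonneg i), hrhat]
    congr 1
    field_simp
  have hexp : 2 / rhat = (r + 1) / r := by
    rw [hrhat]
    field_simp
  rw [sum_congr rfl fun i _ => hsing i, hexp]
  refine csInf_eq_of_forall_le_of_tendsto
    (f := fun ε => (∑ i, (hA.1.eigenvalues i + ε) ^ (r / (r + 1))) ^ ((r + 1) / r)) ?_ ?_ ?_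
  · rintro v ⟨Ω, hΩ, hΩr, rfl⟩
    exact hA.rpow_sum_eigenvalues_le_trace_inv_mul hr hΩ hΩr
  · have hcont : Continuous
        fun ε => (∑ i, (hA.1.eigenvalues i + ε) ^ (r / (r + 1))) ^ ((r + 1) / r) := by
      fun_prop (disch := positivity)
    simpa using hcont.continuousAt.tendsto.mono_left (nhdsWithin_le_nhds (a := 0))
  · intro ε hε
    obtain ⟨Ω, hΩ, hΩr, hval⟩ := hA.exists_posDef_trace_mpow_le_one_trace_inv_mul_le hr hε
    exact ⟨_, ⟨Ω, hΩ, hΩr, rfl⟩, hval⟩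
end

section
/- Let W be a real d×m matrix with WᵀW positive definite, let r, λ₁, λ₂ be positive real numbers, and set Ω* = (λ₁/(2λ₂r))^{1/(r+1)} · (WᵀW)^{1/(r+1)} and λᵣ = (1 + 1/r)·(λ₁^r λ₂ r / 2^r)^{1/(r+1)}. Then (λ₁/2)·tr(W (Ω*)⁻¹ Wᵀ) + λ₂·tr((Ω*)^r) = λᵣ · tr((WᵀW)^{r/(r+1)}), so Ω* attains the infimum of (λ₁/2)·tr(W Ω⁻¹ Wᵀ) + λ₂·tr(Ω^r) over symmetric positive definite Ω. -/
open Matrix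

/-!
Diagonalize `Ω = V diag(ω) Vᵀ` and put `aᵢ = (Vᵀ WᵀW V)ᵢᵢ`. The objective becomes
`∑ᵢ (λ₁/2 · aᵢ/ωᵢ + λ₂ ωᵢʳ)`, and weighted AM-GM bounds each summand below by `λᵣ aᵢ^{r/(r+1)}`,
with equality at `ωᵢ = (λ₁aᵢ/(2λ₂r))^{1/(r+1)}`. The vector `a` is the image of the eigenvalues of
`WᵀW` under the doubly stochastic matrix `((VᵀU)ᵢⱼ²)`, `U` an eigenbasis of `WᵀW`, so concavity of
`t ↦ t^{r/(r+1)}` gives `∑ᵢ aᵢ^{r/(r+1)} ≥ tr (WᵀW)^{r/(r+1)}`. For `Ω*`, a function of `WᵀW`, one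
can take `V = U`, and both inequalities are equalities.
-/

namespace Matrix

variable {n : Type*} [Fintype n] [DecidableEq n]

lemma IsHermitian.star_eigenvectorUnitary_mul_mul {A : Matrix n n ℝ} (hA : A.IsHermitian) :
    star (hA.eigenvectorUnitary : Matrix n n ℝ) * A * hA.eigenvectorUnitary
      = diagonal hA.eigenvalues := by
  simpa using hA.conjStarAlgAut_star_eigenvectorUnitary

lemma IsHermitian.trace_mul_cfc {A : Matrix n n ℝ} (hA : A.IsHermitian) (B : Matrix n n ℝ)
    (f : ℝ → ℝ) :
    (B * cfc f A).trace = ∑ i, (star (hA.eigenvectorUnitary : Matrix n n ℝ) * B *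
      hA.eigenvectorUnitary) i i * f (hA.eigenvalues i) := by
  rw [hA.cfc_eq, IsHermitian.cfc, Unitary.conjStarAlgAut_apply, ← Matrix.mul_assoc,
    trace_mul_comm, ← Matrix.mul_assoc, ← Matrix.mul_assoc, Matrix.trace]
  simp [Matrix.mul_diagonal]

lemma IsHermitian.trace_cfc_s2 {A : Matrix n n ℝ} (hA : A.IsHermitian) (f : ℝ → ℝ) :
    (cfc f A).trace = ∑ i, f (hA.eigenvalues i) := by
  simpa using hA.trace_mul_cfc 1 f

lemma IsHermitian.posDef_cfc_s2 {A : Matrix n n ℝ} (hA : A.IsHermitian) {f : ℝ → ℝ}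
    (hf : ∀ i, 0 < f (hA.eigenvalues i)) : (cfc f A).PosDef := by
  rw [hA.cfc_eq, IsHermitian.cfc, Unitary.conjStarAlgAut_apply,
    IsUnit.posDef_star_right_conjugate_iff Unitary.isUnit_coe, posDef_diagonal_iff]
  exact hf

lemma IsHermitian.inv_cfc_s2 {A : Matrix n n ℝ} (hA : A.IsHermitian) {f : ℝ → ℝ}
    (hf : ∀ i, f (hA.eigenvalues i) ≠ 0) : (cfc f A)⁻¹ = cfc (fun t => (f t)⁻¹) A := by
  rw [nonsing_inv_eq_ringInverse, cfc_inv f A (fun x hx => ?_)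
    (A.finite_real_spectrum.continuousOn f) hA.isSelfAdjoint]
  obtain ⟨i, rfl⟩ := hA.spectrum_real_eq_range_eigenvalues ▸ hx
  exact hf i

lemma IsHermitian.cfc_cfc {A : Matrix n n ℝ} (hA : A.IsHermitian) (f g : ℝ → ℝ) :
    cfc f (cfc g A) = cfc (f ∘ g) A := by
  rw [cfc_comp f g A hA.isSelfAdjoint ((A.finite_real_spectrum.image g).continuousOn f)
    (A.finite_real_spectrum.continuousOn g)]

lemma of_sq_mem_doublyStochastic_of_mem_unitaryGroup {Q : Matrix n n ℝ}
    (hQ : Q ∈ unitaryGroup n ℝ) : of (fun i j => Q i j ^ 2) ∈ doublyStochastic ℝ n := by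
  refine mem_doublyStochastic_iff_sum.mpr ⟨fun i j => sq_nonneg _, fun i => ?_, fun j => ?_⟩
  · simpa [mul_apply, sq] using congrFun (congrFun (mem_unitaryGroup_iff.mp hQ) i) i
  · simpa [mul_apply, sq] using congrFun (congrFun (mem_unitaryGroup_iff'.mp hQ) j) j

lemma _root_.ConcaveOn.sum_le_sum_mulVec_of_mem_doublyStochastic {M : Matrix n n ℝ}
    (hM : M ∈ doublyStochastic ℝ n) {s : Set ℝ} {f : ℝ → ℝ} (hf : ConcaveOn ℝ s f)
    {x : n → ℝ} (hx : ∀ j, x j ∈ s) : ∑ j, f (x j) ≤ ∑ i, f ((M *ᵥ x) i) := by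
  calc ∑ j, f (x j) = ∑ i, ∑ j, M i j * f (x j) := by
        rw [Finset.sum_comm]
        simp [← Finset.sum_mul, sum_col_of_mem_doublyStochastic hM]
    _ ≤ ∑ i, f ((M *ᵥ x) i) := Finset.sum_le_sum fun i _ =>
        hf.le_map_sum (fun j _ => nonneg_of_mem_doublyStochastic hM)
          (sum_row_of_mem_doublyStochastic hM i) (fun j _ => hx j)

lemma IsHermitian.diag_conj_eq_mulVec {A : Matrix n n ℝ} (hA : A.IsHermitian)
    (V : Matrix n n ℝ) (i : n) :
    (star V * A * V) i i = (of (fun i j => (star V * hA.eigenvectorUnitary) i j ^ 2)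
      *ᵥ hA.eigenvalues) i := by
  set U : Matrix n n ℝ := (hA.eigenvectorUnitary : Matrix n n ℝ)
  have hA' : A = U * diagonal hA.eigenvalues * star U := by
    simpa using hA.spectral_theorem
  have hconj : star V * A * V = (star V * U) * diagonal hA.eigenvalues * star (star V * U) := by
    conv_lhs => rw [hA']
    simp only [star_mul, star_star, Matrix.mul_assoc]
  rw [hconj, mul_apply, mulVec, dotProduct]
  refine Finset.sum_congr rfl fun j _ => ?_
  rw [mul_diagonal, star_apply, of_apply, star_trivial ((star V * U) i j)]
  ring

lemma IsHermitian.sum_le_sum_diag_conj {A : Matrix n n ℝ} (hA : A.IsHermitian)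
    {V : Matrix n n ℝ} (hV : V ∈ unitaryGroup n ℝ) {s : Set ℝ} {f : ℝ → ℝ}
    (hf : ConcaveOn ℝ s f) (hs : ∀ i, hA.eigenvalues i ∈ s) :
    ∑ i, f (hA.eigenvalues i) ≤ ∑ i, f ((star V * A * V) i i) := by
  simp_rw [hA.diag_conj_eq_mulVec V]
  exact hf.sum_le_sum_mulVec_of_mem_doublyStochastic (of_sq_mem_doublyStochastic_of_mem_unitaryGroup
    (mul_mem (Unitary.star_mem hV) hA.eigenvectorUnitary.2)) hs

end Matrix

lemma add_one_le_div_add_rpow {r x : ℝ} (hr : 0 < r) (hx : 0 < x) : r + 1 ≤ r / x + x ^ r := by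
  have hr1 : 0 < r + 1 := by linarith
  have amgm := Real.geom_mean_le_arith_mean2_weighted (w₁ := r / (r + 1)) (w₂ := 1 / (r + 1))
    (p₁ := 1 / x) (p₂ := x ^ r) (by positivity) (by positivity) (by positivity) (by positivity)
    (by field_simp)
  have hgm : (1 / x) ^ (r / (r + 1)) * (x ^ r) ^ (1 / (r + 1)) = 1 := by
    rw [one_div, Real.inv_rpow hx.le, ← Real.rpow_mul hx.le, mul_one_div, inv_mul_cancel₀]
    positivity
  calc r + 1 = (r + 1) * ((1 / x) ^ (r / (r + 1)) * (x ^ r) ^ (1 / (r + 1))) := by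
        rw [hgm, mul_one]
    _ ≤ (r + 1) * (r / (r + 1) * (1 / x) + 1 / (r + 1) * x ^ r) := by gcongr
    _ = r / x + x ^ r := by field_simp

lemma add_one_mul_rpow_le {r β x₀ x : ℝ} (hr : 0 < r) (hβ : 0 ≤ β) (hx₀ : 0 < x₀) (hx : 0 < x) :
    (r + 1) * β * x₀ ^ r ≤ r * β * x₀ ^ (r + 1) * x⁻¹ + β * x ^ r := by
  have key := mul_le_mul_of_nonneg_left (add_one_le_div_add_rpow hr (div_pos hx hx₀))
    (mul_nonneg hβ (Real.rpow_nonneg hx₀.le r))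
  have hx₀r : x₀ ^ r ≠ 0 := (Real.rpow_pos_of_pos hx₀ r).ne'
  rw [Real.div_rpow hx.le hx₀.le] at key
  rw [Real.rpow_add_one hx₀.ne']
  calc (r + 1) * β * x₀ ^ r = β * x₀ ^ r * (r + 1) := by ring
    _ ≤ β * x₀ ^ r * (r / (x / x₀) + x ^ r / x₀ ^ r) := key
    _ = r * β * (x₀ ^ r * x₀) * x⁻¹ + β * x ^ r := by field_simp

/-- `Ω* = optimalScale r l1 l2 • (WᵀW)^{1/(r+1)}`, and `optimalConstant r l1 l2` is the paper's
`λᵣ`. -/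
noncomputable def optimalScale (r l1 l2 : ℝ) : ℝ := (l1 / (2 * l2 * r)) ^ (1 / (r + 1))

noncomputable def optimalConstant (r l1 l2 : ℝ) : ℝ :=
  (1 + 1 / r) * (l1 ^ r * l2 * r / (2 : ℝ) ^ r) ^ (1 / (r + 1))

section Scalar

variable {r l1 l2 : ℝ}

lemma optimalScale_pos (hr : 0 < r) (h1 : 0 < l1) (h2 : 0 < l2) :
    0 < optimalScale r l1 l2 := by
  unfold optimalScale; positivity

lemma optimalScale_mul_rpow_pos (hr : 0 < r) (h1 : 0 < l1) (h2 : 0 < l2) {μ : ℝ} (hμ : 0 < μ) :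
    0 < optimalScale r l1 l2 * μ ^ (1 / (r + 1)) :=
  mul_pos (optimalScale_pos hr h1 h2) (Real.rpow_pos_of_pos hμ _)

lemma add_one_mul_optimalScale_rpow (hr : 0 < r) (h1 : 0 < l1) (h2 : 0 < l2) :
    (r + 1) * l2 * optimalScale r l1 l2 ^ r = optimalConstant r l1 l2 := by
  have hr1 : 0 < r + 1 := by linarith
  rw [optimalScale, optimalConstant, one_add_div hr.ne', add_comm r 1]
  refine Real.log_injOn_pos (by simp; positivity) (by simp; positivity) ?_
  simp (disch := positivity) only [Real.log_mul, Real.log_rpow, Real.log_div]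
  field_simp
  ring

lemma half_mul_eq_rpow_add_one (hr : 0 < r) (h1 : 0 < l1) (h2 : 0 < l2) {μ : ℝ} (hμ : 0 ≤ μ) :
    l1 / 2 * μ = r * l2 * (optimalScale r l1 l2 * μ ^ (1 / (r + 1))) ^ (r + 1) := by
  have hr1 : 0 < r + 1 := by linarith
  rw [optimalScale, ← Real.mul_rpow (by positivity) hμ, one_div,
    Real.rpow_inv_rpow (by positivity) hr1.ne']
  field_simp

lemma add_one_mul_rpow_eq_optimalConstant_mul (hr : 0 < r) (h1 : 0 < l1) (h2 : 0 < l2) {μ : ℝ}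
    (hμ : 0 ≤ μ) :
    (r + 1) * l2 * (optimalScale r l1 l2 * μ ^ (1 / (r + 1))) ^ r
      = optimalConstant r l1 l2 * μ ^ (r / (r + 1)) := by
  rw [Real.mul_rpow (optimalScale_pos hr h1 h2).le (Real.rpow_nonneg hμ _), ← Real.rpow_mul hμ,
    one_div_mul_eq_div, ← mul_assoc, add_one_mul_optimalScale_rpow hr h1 h2]

lemma optimalConstant_mul_rpow_le (hr : 0 < r) (h1 : 0 < l1) (h2 : 0 < l2) {a ω : ℝ}
    (ha : 0 < a) (hω : 0 < ω) :
    optimalConstant r l1 l2 * a ^ (r / (r + 1)) ≤ l1 / 2 * (a * ω⁻¹) + l2 * ω ^ r := by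
  rw [← add_one_mul_rpow_eq_optimalConstant_mul hr h1 h2 ha.le, ← mul_assoc,
    half_mul_eq_rpow_add_one hr h1 h2 ha.le]
  exact add_one_mul_rpow_le hr h2.le (optimalScale_mul_rpow_pos hr h1 h2 ha) hω

lemma optimalConstant_mul_rpow_eq (hr : 0 < r) (h1 : 0 < l1) (h2 : 0 < l2) {μ : ℝ} (hμ : 0 < μ) :
    l1 / 2 * (μ * (optimalScale r l1 l2 * μ ^ (1 / (r + 1)))⁻¹)
        + l2 * (optimalScale r l1 l2 * μ ^ (1 / (r + 1))) ^ r
      = optimalConstant r l1 l2 * μ ^ (r / (r + 1)) := by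
  rw [← add_one_mul_rpow_eq_optimalConstant_mul hr h1 h2 hμ.le, ← mul_assoc,
    half_mul_eq_rpow_add_one hr h1 h2 hμ.le,
    Real.rpow_add_one (optimalScale_mul_rpow_pos hr h1 h2 hμ).ne']
  have := (optimalScale_pos hr h1 h2).ne'
  field_simp

end Scalar

noncomputable def traceObjective {d m : ℕ} (W : Matrix (Fin d) (Fin m) ℝ) (l1 l2 r : ℝ)
    (Ω : Matrix (Fin m) (Fin m) ℝ) : ℝ :=
  l1 / 2 * (W * Ω⁻¹ * Wᵀ).trace + l2 * (mpow Ω r).trace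

lemma traceObjective_cfc {d m : ℕ} (W : Matrix (Fin d) (Fin m) ℝ) (l1 l2 r : ℝ)
    {H : Matrix (Fin m) (Fin m) ℝ} (hH : H.IsHermitian) {g : ℝ → ℝ}
    (hg : ∀ i, g (hH.eigenvalues i) ≠ 0) :
    traceObjective W l1 l2 r (cfc g H) = ∑ i,
      (l1 / 2 * ((star (hH.eigenvectorUnitary : Matrix (Fin m) (Fin m) ℝ) * (Wᵀ * W) *
          (hH.eigenvectorUnitary : Matrix (Fin m) (Fin m) ℝ)) i i * (g (hH.eigenvalues i))⁻¹)
        + l2 * g (hH.eigenvalues i) ^ r) := by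
  rw [traceObjective, mpow, hH.inv_cfc_s2 hg, hH.cfc_cfc, trace_mul_cycle, hH.trace_mul_cfc,
    hH.trace_cfc_s2, Finset.mul_sum, Finset.mul_sum, ← Finset.sum_add_distrib]
  rfl

section Objective

variable {d m : ℕ} {W : Matrix (Fin d) (Fin m) ℝ} {r l1 l2 : ℝ}

lemma traceObjective_cfc_optimalScale (hW : (Wᵀ * W).PosDef) (hr : 0 < r) (h1 : 0 < l1)
    (h2 : 0 < l2) :
    traceObjective W l1 l2 r (cfc (fun t => optimalScale r l1 l2 * t ^ (1 / (r + 1))) (Wᵀ * W))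
      = optimalConstant r l1 l2 * (mpow (Wᵀ * W) (r / (r + 1))).trace := by
  have hμ := hW.eigenvalues_pos
  rw [traceObjective_cfc W l1 l2 r hW.isHermitian
      fun i => (optimalScale_mul_rpow_pos hr h1 h2 (hμ i)).ne',
    hW.isHermitian.star_eigenvectorUnitary_mul_mul, mpow, hW.isHermitian.trace_cfc_s2,
    Finset.mul_sum]
  refine Finset.sum_congr rfl fun i _ => ?_
  rw [diagonal_apply_eq]
  exact optimalConstant_mul_rpow_eq hr h1 h2 (hμ i)

lemma optimalConstant_mul_trace_le (hW : (Wᵀ * W).PosDef) (hr : 0 < r) (h1 : 0 < l1)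
    (h2 : 0 < l2) {Ω : Matrix (Fin m) (Fin m) ℝ} (hΩ : Ω.PosDef) :
    optimalConstant r l1 l2 * (mpow (Wᵀ * W) (r / (r + 1))).trace
      ≤ traceObjective W l1 l2 r Ω := by
  set A := Wᵀ * W
  set V := (hΩ.isHermitian.eigenvectorUnitary : Matrix (Fin m) (Fin m) ℝ)
  set ω := hΩ.isHermitian.eigenvalues
  have hω : ∀ i, 0 < ω i := hΩ.eigenvalues_pos
  have hdiag : ∀ i, 0 < (star V * A * V) i i :=
    fun i => ((IsUnit.posDef_star_left_conjugate_iff Unitary.isUnit_coe).mpr hW).diag_pos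
  have hobj : traceObjective W l1 l2 r Ω
      = ∑ i, (l1 / 2 * ((star V * A * V) i i * (ω i)⁻¹) + l2 * ω i ^ r) := by
    have := traceObjective_cfc W l1 l2 r hΩ.isHermitian (g := id) fun i => (hω i).ne'
    rwa [cfc_id ℝ Ω hΩ.isHermitian.isSelfAdjoint] at this
  have hconcave : ∑ i, hW.isHermitian.eigenvalues i ^ (r / (r + 1))
      ≤ ∑ i, (star V * A * V) i i ^ (r / (r + 1)) :=
    hW.isHermitian.sum_le_sum_diag_conj hΩ.isHermitian.eigenvectorUnitary.2
      (Real.concaveOn_rpow (by positivity) (div_le_one_of_le₀ (by linarith) (by positivity)))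
      fun i => (hW.eigenvalues_pos i).le
  have hC : 0 < optimalConstant r l1 l2 := by unfold optimalConstant; positivity
  calc optimalConstant r l1 l2 * (mpow A (r / (r + 1))).trace
      = optimalConstant r l1 l2 * ∑ i, hW.isHermitian.eigenvalues i ^ (r / (r + 1)) := by
        rw [mpow, hW.isHermitian.trace_cfc_s2]
    _ ≤ ∑ i, optimalConstant r l1 l2 * (star V * A * V) i i ^ (r / (r + 1)) := by
        rw [← Finset.mul_sum]
        exact mul_le_mul_of_nonneg_left hconcave hC.le
    _ ≤ traceObjective W l1 l2 r Ω := by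
        rw [hobj]
        exact Finset.sum_le_sum fun i _ => optimalConstant_mul_rpow_le hr h1 h2 (hdiag i) (hω i)

end Objective

/-- Ω* = (λ₁/(2λ₂r))^{1/(r+1)} · (WᵀW)^{1/(r+1)} attains the infimum of
(λ₁/2)·tr(W Ω⁻¹ Wᵀ) + λ₂·tr(Ω^r) over symmetric positive definite Ω, with optimal
value λᵣ · tr((WᵀW)^{r/(r+1)}). -/
theorem stmt2 {d m : ℕ} (W : Matrix (Fin d) (Fin m) ℝ) (hW : (Wᵀ * W).PosDef)
    (r lam1 lam2 : ℝ) (hr : 0 < r) (h1 : 0 < lam1) (h2 : 0 < lam2)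
    (Ωstar : Matrix (Fin m) (Fin m) ℝ)
    (hΩstar : Ωstar = ((lam1 / (2 * lam2 * r)) ^ (1 / (r + 1))) • mpow (Wᵀ * W) (1 / (r + 1)))
    (lamr : ℝ)
    (hlamr : lamr = (1 + 1 / r) * (lam1 ^ r * lam2 * r / (2 : ℝ) ^ r) ^ (1 / (r + 1))) :
    (lam1 / 2) * (W * Ωstar⁻¹ * Wᵀ).trace + lam2 * (mpow Ωstar r).trace
      = lamr * (mpow (Wᵀ * W) (r / (r + 1))).trace ∧
    Ωstar.PosDef ∧
    ∀ Ω : Matrix (Fin m) (Fin m) ℝ, Ω.PosDef →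
      (lam1 / 2) * (W * Ωstar⁻¹ * Wᵀ).trace + lam2 * (mpow Ωstar r).trace ≤
        (lam1 / 2) * (W * Ω⁻¹ * Wᵀ).trace + lam2 * (mpow Ω r).trace := by
  have hΩ : Ωstar = cfc (fun t => optimalScale r lam1 lam2 * t ^ (1 / (r + 1))) (Wᵀ * W) := by
    rw [hΩstar, mpow, ← cfc_const_mul _ _ _ ((Wᵀ * W).finite_real_spectrum.continuousOn _)]
    rfl
  have hvalue : traceObjective W lam1 lam2 r Ωstar
      = lamr * (mpow (Wᵀ * W) (r / (r + 1))).trace :=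
    hΩ ▸ hlamr ▸ traceObjective_cfc_optimalScale hW hr h1 h2
  refine ⟨hvalue, hΩ ▸ hW.isHermitian.posDef_cfc_s2 fun i => ?_, fun Ω hΩpos => ?_⟩
  · exact optimalScale_mul_rpow_pos hr h1 h2 (hW.eigenvalues_pos i)
  · exact hvalue.trans_le (hlamr ▸ optimalConstant_mul_trace_le hW hr h1 h2 hΩpos)
end

section
/- Let W be a real d×m matrix and λ₁, λ₂ > 0. Then the infimum, over all m×m real symmetric positive definite matrices Ω, of (λ₁/2)·tr(W Ω⁻¹ Wᵀ) + λ₂·tr(Ω) equals √(2λ₁λ₂) · Σᵢ σᵢ(W), i.e., √(2λ₁λ₂) times the trace norm (sum of singular values) of W. -/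
open Matrix

/-! With `B = √(WᵀW)`, whose trace is the trace norm of `W`, and `S = √Ω`, Cauchy–Schwarz for
the trace inner product gives `(tr B)² = tr((BS⁻¹)ᵀS)² ≤ tr(WΩ⁻¹Wᵀ) · tr Ω`, and AM–GM turns this
into the lower bound. It is approached along `Ω = κ (B + ε)` with `κ = √(λ₁/(2λ₂))` and `ε → 0`;
the limit `κ B` itself need not be invertible. -/

open scoped MatrixOrder

lemma trace_transpose_mul_sq_le {m n : Type*} [Fintype m] [Fintype n] (X Y : Matrix m n ℝ) :
    (Xᵀ * Y).trace ^ 2 ≤ (Xᵀ * X).trace * (Yᵀ * Y).trace := by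
  have h_sum (P Q : Matrix m n ℝ) : (Pᵀ * Q).trace = ∑ p : m × n, P p.1 p.2 * Q p.1 p.2 := by
    simp only [trace, diag, mul_apply, transpose_apply, Fintype.sum_prod_type]
    exact Finset.sum_comm
  simpa only [h_sum, sq] using
    Finset.sum_mul_sq_le_sq_mul_sq Finset.univ (fun p : m × n ↦ X p.1 p.2) (fun p ↦ Y p.1 p.2)

lemma Matrix.posSemidef_transpose_mul_self {d n : Type*} [Fintype d] [Fintype n]
    (W : Matrix d n ℝ) : (Wᵀ * W).PosSemidef := by
  simpa using W.posSemidef_conjTranspose_mul_self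

section

variable {n : Type*} [Fintype n] [DecidableEq n]

lemma Matrix.IsHermitian.trace_cfc_s15 {A : Matrix n n ℝ} (hA : A.IsHermitian) (f : ℝ → ℝ) :
    (cfc f A).trace = ∑ i, f (hA.eigenvalues i) := by
  rw [hA.cfc_eq, IsHermitian.cfc, Unitary.conjStarAlgAut_apply, trace_mul_cycle,
    Unitary.coe_star_mul_self, one_mul, trace_diagonal]
  rfl

lemma Matrix.IsHermitian.posDef_cfc_s15 {A : Matrix n n ℝ} (hA : A.IsHermitian) {f : ℝ → ℝ}
    (hf : ∀ x ∈ spectrum ℝ A, 0 < f x) : (cfc f A).PosDef :=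
  isStrictlyPositive_iff_posDef.mp <|
    (cfc_isStrictlyPositive_iff f A (A.finite_real_spectrum.continuousOn f) hA).mpr hf

lemma Matrix.IsHermitian.trace_mul_cfc_inv_mul_transpose {d : Type*} [Fintype d]
    {W : Matrix d n ℝ} (hA : (Wᵀ * W).IsHermitian) {g : ℝ → ℝ}
    (hg : ∀ x ∈ spectrum ℝ (Wᵀ * W), g x ≠ 0) :
    (W * (cfc g (Wᵀ * W))⁻¹ * Wᵀ).trace = ∑ i, hA.eigenvalues i / g (hA.eigenvalues i) := by
  have h_div : cfc (fun x ↦ x / g x) (Wᵀ * W) = Wᵀ * W * (cfc g (Wᵀ * W))⁻¹ := by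
    rw [cfc_map_div (fun x ↦ x) g _ hg (hg := (Wᵀ * W).finite_real_spectrum.continuousOn g),
      cfc_id' ℝ (Wᵀ * W), nonsing_inv_eq_ringInverse]
  rw [trace_mul_cycle, ← h_div, hA.trace_cfc_s15]

lemma Matrix.isSymm_sqrt (A : Matrix n n ℝ) : (CFC.sqrt A).IsSymm :=
  isHermitian_iff_isSymm.mp (CFC.sqrt_nonneg A).posSemidef.isHermitian

lemma trace_sq_le_of_mul_self_eq {d : Type*} [Fintype d] {W : Matrix d n ℝ} {B S : Matrix n n ℝ}
    (hB : B.IsSymm) (hS : S.IsSymm) (hS_unit : IsUnit S.det) (hBB : B * B = Wᵀ * W) :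
    B.trace ^ 2 ≤ (W * (S * S)⁻¹ * Wᵀ).trace * (S * S).trace := by
  have hS_inv : S⁻¹ᵀ = S⁻¹ := by rw [transpose_nonsing_inv, hS.eq]
  have h_left : ((B * S⁻¹)ᵀ * S).trace = B.trace := by
    rw [transpose_mul, hS_inv, hB.eq, trace_mul_cycle, mul_nonsing_inv S hS_unit, one_mul]
  have h_mid : ((B * S⁻¹)ᵀ * (B * S⁻¹)).trace = (W * (S * S)⁻¹ * Wᵀ).trace := calc
    _ = (S⁻¹ * (B * B) * S⁻¹).trace := by
      rw [transpose_mul, hS_inv, hB.eq]; simp only [Matrix.mul_assoc]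
    _ = (W * (S * S)⁻¹ * Wᵀ).trace := by
      rw [hBB, Matrix.mul_inv_rev, trace_mul_cycle, trace_mul_cycle W, trace_mul_comm]
  have h_right : (Sᵀ * S).trace = (S * S).trace := by rw [hS.eq]
  simpa only [h_left, h_mid, h_right] using trace_transpose_mul_sq_le (B * S⁻¹) S

end

lemma sqrt_mul_le_add_of_sq_le_mul {a c t s b : ℝ} (ha : 0 ≤ a) (hc : 0 ≤ c) (ht : 0 ≤ t)
    (hs : 0 ≤ s) (h : b ^ 2 ≤ t * s) : √(4 * a * c) * b ≤ a * t + c * s := calc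
  √(4 * a * c) * b ≤ √(4 * a * c) * √(t * s) :=
    mul_le_mul_of_nonneg_left ((le_abs_self b).trans (Real.abs_le_sqrt h)) (Real.sqrt_nonneg _)
  _ = √(4 * a * c * (t * s)) := (Real.sqrt_mul (by positivity) _).symm
  _ ≤ √((a * t + c * s) ^ 2) := Real.sqrt_le_sqrt (by nlinarith [sq_nonneg (a * t - c * s)])
  _ = a * t + c * s := Real.sqrt_sq (by positivity)

lemma mul_div_add_mul_sqrt_add_le {c κ ε μ : ℝ} (hc : 0 ≤ c) (hκ : 0 < κ) (hε : 0 < ε)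
    (hμ : 0 ≤ μ) :
    c * κ ^ 2 * μ / (κ * (√μ + ε)) + c * (κ * (√μ + ε)) ≤ 2 * c * κ * √μ + c * κ * ε := by
  obtain ⟨σ, hσ, rfl⟩ : ∃ σ, 0 ≤ σ ∧ μ = σ ^ 2 :=
    ⟨√μ, Real.sqrt_nonneg μ, (Real.sq_sqrt hμ).symm⟩
  rw [Real.sqrt_sq hσ]
  have h_div : c * κ ^ 2 * σ ^ 2 / (κ * (σ + ε)) ≤ c * κ * σ := by
    rw [div_le_iff₀ (by positivity)]
    nlinarith [mul_nonneg (mul_nonneg hc (sq_nonneg κ)) (mul_nonneg hσ hε.le)]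
  linarith

lemma trace_sqrt_transpose_mul_self {d m : ℕ} (W : Matrix (Fin d) (Fin m) ℝ) :
    (CFC.sqrt (Wᵀ * W)).trace = ∑ i, singVal W i := by
  rw [CFC.sqrt_eq_real_sqrt _ (posSemidef_transpose_mul_self W).nonneg, cfcₙ_eq_cfc,
    (isHermitian_transpose_mul W).trace_cfc_s15]
  rfl

lemma sqrt_mul_sum_singVal_le {d m : ℕ} (W : Matrix (Fin d) (Fin m) ℝ) {lam1 lam2 : ℝ}
    (h1 : 0 ≤ lam1) (h2 : 0 ≤ lam2) {Ω : Matrix (Fin m) (Fin m) ℝ} (hΩ : Ω.PosDef) :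
    √(2 * lam1 * lam2) * ∑ i, singVal W i ≤
      (lam1 / 2) * (W * Ω⁻¹ * Wᵀ).trace + lam2 * Ω.trace := by
  have hSS : CFC.sqrt Ω * CFC.sqrt Ω = Ω := CFC.sqrt_mul_sqrt_self Ω hΩ.posSemidef.nonneg
  have hS_unit : IsUnit (CFC.sqrt Ω).det :=
    isUnit_iff_isUnit_det _ |>.mp <| isUnit_of_mul_isUnit_left (hSS ▸ hΩ.isUnit)
  have h_cs := trace_sq_le_of_mul_self_eq (isSymm_sqrt _) (isSymm_sqrt Ω) hS_unit
    (CFC.sqrt_mul_sqrt_self _ (posSemidef_transpose_mul_self W).nonneg)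
  rw [hSS, trace_sqrt_transpose_mul_self] at h_cs
  have h_psd : (W * Ω⁻¹ * Wᵀ).PosSemidef := by
    simpa using hΩ.inv.posSemidef.mul_mul_conjTranspose_same W
  rw [show 2 * lam1 * lam2 = 4 * (lam1 / 2) * lam2 by ring]
  exact sqrt_mul_le_add_of_sq_le_mul (by positivity) h2 h_psd.trace_nonneg
    hΩ.posSemidef.trace_nonneg h_cs

lemma exists_posDef_lt_sqrt_mul_sum_singVal_add {d m : ℕ} (W : Matrix (Fin d) (Fin m) ℝ)
    {lam1 lam2 δ : ℝ} (h1 : 0 < lam1) (h2 : 0 < lam2) (hδ : 0 < δ) :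
    ∃ Ω : Matrix (Fin m) (Fin m) ℝ, Ω.PosDef ∧
      (lam1 / 2) * (W * Ω⁻¹ * Wᵀ).trace + lam2 * Ω.trace <
        √(2 * lam1 * lam2) * ∑ i, singVal W i + δ := by
  have hA := isHermitian_transpose_mul W
  set μ := hA.eigenvalues
  set κ := √(lam1 / (2 * lam2))
  have hκ : 0 < κ := by positivity
  have hκ_sq : lam1 / 2 = lam2 * κ ^ 2 := by
    rw [Real.sq_sqrt (by positivity)]; field_simp
  have h_sqrt : √(2 * lam1 * lam2) = 2 * lam2 * κ := by
    rw [← Real.sqrt_sq (by positivity : 0 ≤ 2 * lam2 * κ)]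
    congr 1
    linear_combination 4 * lam2 * hκ_sq
  obtain ⟨ε, hε, hε_small⟩ := exists_pos_mul_lt hδ (m * (lam2 * κ))
  set f : ℝ → ℝ := fun t ↦ κ * (√t + ε)
  have hf : ∀ t, 0 < f t := fun t ↦ by positivity
  refine ⟨cfc f (Wᵀ * W), hA.posDef_cfc_s15 fun t _ ↦ hf t, ?_⟩
  rw [hA.trace_mul_cfc_inv_mul_transpose fun t _ ↦ (hf t).ne', hA.trace_cfc_s15, h_sqrt]
  calc (lam1 / 2) * ∑ i, μ i / f (μ i) + lam2 * ∑ i, f (μ i)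
      = ∑ i, (lam2 * κ ^ 2 * μ i / f (μ i) + lam2 * f (μ i)) := by
        rw [hκ_sq, Finset.mul_sum, Finset.mul_sum, ← Finset.sum_add_distrib]
        simp only [mul_div_assoc]
    _ ≤ ∑ i, (2 * lam2 * κ * √(μ i) + lam2 * κ * ε) :=
        Finset.sum_le_sum fun i _ ↦ mul_div_add_mul_sqrt_add_le h2.le hκ hε
          ((posSemidef_transpose_mul_self W).eigenvalues_nonneg i)
    _ = 2 * lam2 * κ * ∑ i, singVal W i + m * (lam2 * κ) * ε := by
        rw [Finset.sum_add_distrib, ← Finset.mul_sum, Finset.sum_const, Finset.card_univ,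
          Fintype.card_fin, nsmul_eq_mul]
        simp only [singVal, μ]
        ring
    _ < 2 * lam2 * κ * ∑ i, singVal W i + δ := by linarith

/-- the infimum over symmetric positive definite Ω of
(λ₁/2)·tr(W Ω⁻¹ Wᵀ) + λ₂·tr(Ω) equals √(2λ₁λ₂) times the trace norm of W. -/
theorem stmt15 {d m : ℕ} (W : Matrix (Fin d) (Fin m) ℝ) (lam1 lam2 : ℝ)
    (h1 : 0 < lam1) (h2 : 0 < lam2) :
    sInf {v : ℝ | ∃ Ω : Matrix (Fin m) (Fin m) ℝ, Ω.PosDef ∧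
        v = (lam1 / 2) * (W * Ω⁻¹ * Wᵀ).trace + lam2 * Ω.trace}
      = Real.sqrt (2 * lam1 * lam2) * ∑ i, singVal W i := by
  refine csInf_eq_of_forall_ge_of_forall_gt_exists_lt ⟨_, 1, .one, rfl⟩ ?_ fun w hw ↦ ?_
  · rintro v ⟨Ω, hΩ, rfl⟩
    exact sqrt_mul_sum_singVal_le W h1.le h2.le hΩ
  · obtain ⟨Ω, hΩ, h_le⟩ := exists_posDef_lt_sqrt_mul_sum_singVal_add W h1 h2 (sub_pos.2 hw)
    exact ⟨_, ⟨Ω, hΩ, rfl⟩, by linarith⟩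
end
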